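/- arXiv:2108.10195 — 2 statements merged into one kernel-verified Lean document; each statement's English description precedes it below -/
import Mathlib

section
/- Let R be a set of r-simplices of K(G) that intersects every r-cycle of K(G) homologous to ζ. If there exists a cycle ζ' homologous to ζ such that every simplex of R contained in ζ' is inadmissible, then |R| ≥ m. -/
namespace ArxivCut

noncomputable section

attribute [local instance] Classical.propDecidable

open Finset

variable {V : Type*} [Fintype V] [DecidableEq V]

/-- A finite abstract simplicial complex on the vertex type `V`. -/
structure SComplex (V : Type*) [DecidableEq V] where
  faces : Finset (Finset V)
  nonempty_mem : ∀ s ∈ faces, s.Nonempty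
  down_closed : ∀ s ∈ faces, ∀ t ⊆ s, t.Nonempty → t ∈ faces

/-- The boundary of a `𝔽₂`-chain (a chain is identified with its set of simplices):
a simplex `τ` lies in the boundary iff it is a facet of an odd number of members. -/
def bdry (c : Finset (Finset V)) : Finset (Finset V) :=
  Finset.univ.filter fun τ => Odd ((c.filter fun σ => τ ⊆ σ ∧ τ.card + 1 = σ.card)).card

/-- `c` is an `r`-chain of `K` (a set of `r`-simplices of `K`). -/
def IsRChain (K : SComplex V) (r : ℕ) (c : Finset (Finset V)) : Prop :=
  ∀ σ ∈ c, σ ∈ K.faces ∧ σ.card = r + 1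

/-- `c` is an `r`-cycle of `K`. -/
def IsRCycle (K : SComplex V) (r : ℕ) (c : Finset (Finset V)) : Prop :=
  IsRChain K r c ∧ bdry c = ∅

/-- `z` is a bounding `r`-cycle of `K`: it is the boundary of an `(r+1)`-chain of `K`. -/
def IsBounding (K : SComplex V) (r : ℕ) (z : Finset (Finset V)) : Prop :=
  ∃ b, IsRChain K (r + 1) b ∧ bdry b = z

/-- Two `r`-chains are homologous in `K` if their `𝔽₂`-sum (symmetric difference) bounds. -/
def Homologous (K : SComplex V) (r : ℕ) (a b : Finset (Finset V)) : Prop :=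
  IsBounding K r (symmDiff a b)


/-- The simplicial complex generated by a set of (maximal) faces: all nonempty subsets of
the generators. -/
def closureOf (gens : Finset (Finset V)) : SComplex V where
  faces := Finset.univ.filter fun s => s.Nonempty ∧ ∃ t ∈ gens, s ⊆ t
  nonempty_mem := by
    intro s hs
    exact ((Finset.mem_filter.mp hs).2).1
  down_closed := by
    intro s hs t hts ht
    rw [Finset.mem_filter] at hs ⊢
    obtain ⟨-, -, g, hg, hsg⟩ := hs
    exact ⟨Finset.mem_univ t, ht, g, hg, hts.trans hsg⟩

/-! ### The complex `K(G)` of the reduction from `k`-Multicolored Clique -/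

variable (α : Type*) [Fintype α] [DecidableEq α] (k : ℕ)

/-- Base vertices: the vertices of the graph `G`, the `k` colors, and the dummy
vertex `d`. -/
abbrev BaseV := α ⊕ (Fin k ⊕ Unit)

/-- The vertices of `K(G)`: the base vertices together with the new vertices `u_ℓ^ω`
(indexed by a finset of base vertices and `ℓ ∈ [m]`, where `m = n³`, `n = |V|`). -/
abbrev Vtx := BaseV α k ⊕ (Finset (BaseV α k) × Fin (Fintype.card α ^ 3))

/-- The vertex of `K(G)` corresponding to a graph vertex. -/
def vG (v : α) : Vtx α k := Sum.inl (Sum.inl v)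

/-- The vertex of `K(G)` corresponding to a color. -/
def colV (i : Fin k) : Vtx α k := Sum.inl (Sum.inr (Sum.inl i))

/-- The dummy vertex `d`. -/
def dV : Vtx α k := Sum.inl (Sum.inr (Sum.inr ()))

/-- Retraction of a vertex of `K(G)` onto the base vertices (used only to index the new
vertices `u_ℓ^ω` by the simplex `ω`). -/
def retr : Vtx α k → BaseV α k := Sum.elim id fun _ => Sum.inr (Sum.inr ())

/-- The new vertex `u_ℓ^ω` associated to the simplex `ω` and index `ℓ`. -/
def uV (ω : Finset (Vtx α k)) (ℓ : Fin (Fintype.card α ^ 3)) : Vtx α k :=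
  Sum.inr (ω.image (retr α k), ℓ)

/-- The `r`-simplex `V` on the vertex set of `G` (where `r = |V| − 1`). -/
def VV : Finset (Vtx α k) := Finset.univ.image (vG α k)

/-- The `(r+1)`-simplex `σ_i = V ∪ {i}`. -/
def sigmaS (i : Fin k) : Finset (Vtx α k) := insert (colV α k i) (VV α k)

/-- The `(r+1)`-simplex `τ_{i,j}^v = (V ∖ {v}) ∪ {i, j}` with `i = c(v)`. -/
def tauS (c : α → Fin k) (v : α) (j : Fin k) : Finset (Vtx α k) :=
  insert (colV α k (c v)) (insert (colV α k j) ((VV α k).erase (vG α k v)))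

/-- The `r`-simplex `α_i^v = (V ∖ {v}) ∪ {i}` with `i = c(v)`. -/
def alphaS (c : α → Fin k) (v : α) : Finset (Vtx α k) :=
  insert (colV α k (c v)) ((VV α k).erase (vG α k v))

/-- The `r`-simplex `β_{i,j}^{v,u} = (V ∖ {v,u}) ∪ {i, j}` with `i = c(v)`, `j = c(u)`. -/
def betaS (c : α → Fin k) (v u : α) : Finset (Vtx α k) :=
  insert (colV α k (c v))
    (insert (colV α k (c u)) (((VV α k).erase (vG α k v)).erase (vG α k u)))

/-- The `(r+1)`-simplex `μ_ℓ(ω) = ω ∪ {u_ℓ^ω}`. -/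
def muS (ω : Finset (Vtx α k)) (ℓ : Fin (Fintype.card α ^ 3)) : Finset (Vtx α k) :=
  insert (uV α k ω ℓ) ω

/-- The input cycle `ζ = V + Σ_{u ∈ V} (V ∖ {u}) ∪ {d}` as a set of `r`-simplices. -/
def zetaC : Finset (Finset (Vtx α k)) :=
  insert (VV α k)
    (Finset.univ.image fun u : α => insert (dV α k) ((VV α k).erase (vG α k u)))

/-- The admissible `r`-simplices of `K(G)`: `V`, the `α_i^v` (`v ∈ V_i`), and the
`β_{i,j}^{v,u}` (`v ∈ V_i`, `u ∈ V_j`, `{u,v} ∈ E`; the condition `i ≠ j` follows from the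
coloring being proper). -/
def Adm (G : SimpleGraph α) (c : α → Fin k) (s : Finset (Vtx α k)) : Prop :=
  s = VV α k ∨ (∃ v : α, s = alphaS α k c v) ∨
    ∃ v u : α, G.Adj v u ∧ s = betaS α k c v u

/-- The big `(r+1)`-simplices of `K(G)`: the `σ_i` and the `τ_{i,j}^v` (`j ≠ i = c(v)`). -/
def bigS (c : α → Fin k) : Finset (Finset (Vtx α k)) :=
  (Finset.univ.image fun i : Fin k => sigmaS α k i) ∪
    ((Finset.univ (α := α × Fin k)).filter fun p => p.2 ≠ c p.1).image
      fun p => tauS α k c p.1 p.2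

/-- The undesirable `r`-simplices: the non-admissible facets of the `σ_i` and of the
`τ_{i,j}^v`. -/
def Undes (G : SimpleGraph α) (c : α → Fin k) (s : Finset (Vtx α k)) : Prop :=
  ¬ Adm α k G c s ∧ ∃ t ∈ bigS α k c, s ⊆ t ∧ s.card + 1 = t.card

/-- The inadmissible `r`-simplices: the facets of the cofacets `μ_ℓ(ω)` of the undesirable
simplices `ω` (in particular every undesirable simplex is inadmissible). -/
def Inadm (G : SimpleGraph α) (c : α → Fin k) (s : Finset (Vtx α k)) : Prop :=
  ∃ ω ℓ, Undes α k G c ω ∧ s ⊆ muS α k ω ℓ ∧ s.card + 1 = (muS α k ω ℓ).card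

/-- The generating (maximal) faces of `K(G)`. -/
def gens (G : SimpleGraph α) (c : α → Fin k) : Finset (Finset (Vtx α k)) :=
  zetaC α k ∪ bigS α k c ∪
    ((Finset.univ (α := Finset (Vtx α k))).filter fun ω => Undes α k G c ω).biUnion
      fun ω => Finset.univ.image fun ℓ : Fin (Fintype.card α ^ 3) => muS α k ω ℓ

/-- The complex `K(G)` of the reduction. -/
def KG (G : SimpleGraph α) (c : α → Fin k) : SComplex (Vtx α k) :=
  closureOf (gens α k G c)

/-!
Suppose `|R| < m`. A face of `K(G)` containing `u_ℓ^ω` lies in `μ_ℓ(ω)`, so for each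
undesirable `ω` fewer than `m` of the indices `ℓ` are used by simplices of `R`. In a cycle the
facets `μ_ℓ(ω) ∖ {w}`, `w ∈ ω`, are all present or all absent, since the intersection of two
of them has no further cofacet. Adding to `ζ'` the boundary of the cofacets `μ_ℓ(ω)` with `ℓ`
used by `R` and these facets present, corrected by one unused index to fix the parity at `ω`,
gives a cycle homologous to `ζ` that avoids `R`: every simplex of `R` met by `ζ'` or by that
boundary is inadmissible, i.e. it is `ω` itself or one of these facets.
-/

open scoped symmDiff

section Chains

lemma covBy_iff_subset_card {β : Type*} [DecidableEq β] {s t : Finset β} :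
    s ⋖ t ↔ s ⊆ t ∧ s.card + 1 = t.card := by
  rw [covBy_iff_card_sdiff_eq_one]
  refine and_congr_right fun h => ?_
  have := card_le_card h
  rw [card_sdiff_of_subset h]
  omega

lemma odd_card_symmDiff {β : Type*} [DecidableEq β] (s t : Finset β) :
    Odd (s ∆ t).card ↔ ¬(Odd s.card ↔ Odd t.card) := by
  have h₁ := card_sdiff_add_card_inter s t
  have h₂ := card_sdiff_add_card_inter t s
  have h₃ : (s ∆ t).card = (s \ t).card + (t \ s).card :=
    card_union_of_disjoint disjoint_sdiff_sdiff
  rw [inter_comm] at h₂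
  simp only [Nat.odd_iff]
  omega

lemma exists_finset_agree_odd_iff {ι : Type*} [Fintype ι] [DecidableEq ι] (A F : Finset ι)
    (hA : A.card < Fintype.card ι) (P : Prop) :
    ∃ T : Finset ι, (∀ i ∈ A, i ∈ T ↔ i ∈ F) ∧ (Odd T.card ↔ P) := by
  obtain ⟨i₀, -, hi₀⟩ := exists_mem_notMem_of_card_lt_card (s := A) (t := univ)
    (by rwa [card_univ])
  by_cases hF : Odd F.card ↔ P
  · exact ⟨F, fun _ _ => Iff.rfl, hF⟩
  refine ⟨F ∆ {i₀}, fun i hi => ?_, ?_⟩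
  · simp [mem_symmDiff, ne_of_mem_of_not_mem hi hi₀]
  · rw [odd_card_symmDiff, card_singleton]
    simp only [odd_one, iff_true]
    tauto

lemma mem_bdry {c : Finset (Finset V)} {τ : Finset V} :
    τ ∈ bdry c ↔ Odd (c.filter (τ ⋖ ·)).card := by
  simp only [bdry, mem_filter, mem_univ, true_and, covBy_iff_subset_card]

lemma exists_covBy_of_mem_bdry {c : Finset (Finset V)} {τ : Finset V} (h : τ ∈ bdry c) :
    ∃ σ ∈ c, τ ⋖ σ := by
  obtain ⟨σ, hσ⟩ := card_pos.1 (mem_bdry.1 h).pos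
  exact ⟨σ, mem_filter.1 hσ⟩

lemma bdry_symmDiff (a b : Finset (Finset V)) : bdry (a ∆ b) = bdry a ∆ bdry b := by
  have hfilter (τ : Finset V) :
      (a ∆ b).filter (τ ⋖ ·) = a.filter (τ ⋖ ·) ∆ b.filter (τ ⋖ ·) := by
    ext σ
    simp only [mem_filter, mem_symmDiff]
    tauto
  ext τ
  simp only [mem_symmDiff, mem_bdry, hfilter, odd_card_symmDiff]
  tauto

lemma bdry_empty : bdry (∅ : Finset (Finset V)) = ∅ := by
  ext
  simp [mem_bdry]

lemma mem_bdry_singleton {ρ τ : Finset V} : τ ∈ bdry {ρ} ↔ τ ⋖ ρ := by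
  rw [mem_bdry, filter_singleton]
  split_ifs with h <;> simp [h]

lemma even_card_filter_covBy_covBy (τ ρ : Finset V) :
    Even (univ.filter fun σ => τ ⋖ σ ∧ σ ⋖ ρ).card := by
  by_cases h : τ ⊆ ρ ∧ τ.card + 2 = ρ.card
  · have hset :
        (univ.filter fun σ => τ ⋖ σ ∧ σ ⋖ ρ) = (ρ \ τ).image (insert · τ) := by
      ext σ
      simp only [mem_filter, mem_univ, true_and, mem_image, mem_sdiff]
      constructor
      · rintro ⟨hτσ, hσρ⟩
        obtain ⟨a, ha, rfl⟩ := covBy_iff_exists_insert.1 hτσ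
        exact ⟨a, ⟨(covBy_iff_subset_card.1 hσρ).1 (mem_insert_self a τ), ha⟩, rfl⟩
      · rintro ⟨a, ⟨haρ, ha⟩, rfl⟩
        refine ⟨covBy_insert ha, covBy_iff_subset_card.2 ⟨insert_subset haρ h.1, ?_⟩⟩
        rw [card_insert_of_notMem ha]
        omega
    rw [hset, card_image_of_injOn fun a ha b _ hab => (insert_inj (mem_sdiff.1 ha).2).1 hab,
      card_sdiff_of_subset h.1]
    exact ⟨1, by omega⟩
  · have hempty : (univ.filter fun σ => τ ⋖ σ ∧ σ ⋖ ρ) = ∅ := by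
      refine filter_eq_empty_iff.2 fun σ _ ⟨hτ, hρ⟩ => h ?_
      obtain ⟨hτσ, hτc⟩ := covBy_iff_subset_card.1 hτ
      obtain ⟨hσρ, hσc⟩ := covBy_iff_subset_card.1 hρ
      exact ⟨hτσ.trans hσρ, by omega⟩
    simp [hempty]

lemma bdry_bdry_singleton (ρ : Finset V) : bdry (bdry {ρ}) = ∅ := by
  ext τ
  have : (bdry {ρ}).filter (τ ⋖ ·) = univ.filter fun σ => τ ⋖ σ ∧ σ ⋖ ρ := by
    ext σ
    simp only [mem_filter, mem_bdry_singleton, mem_univ, true_and, and_comm]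
  simpa [mem_bdry, this] using even_card_filter_covBy_covBy τ ρ

lemma bdry_bdry (b : Finset (Finset V)) : bdry (bdry b) = ∅ := by
  induction b using Finset.induction_on with
  | empty => rw [bdry_empty, bdry_empty]
  | insert ρ b hρ ih =>
    rw [insert_eq, ← symmDiff_eq_union (disjoint_singleton_left.2 hρ), bdry_symmDiff,
      bdry_symmDiff, ih, bdry_bdry_singleton, symmDiff_self]
    rfl

lemma mem_iff_mem_of_bdry_eq_empty {z : Finset (Finset V)} (hz : bdry z = ∅)
    {τ a b : Finset V} (hab : a ≠ b) (ha : τ ⋖ a) (hb : τ ⋖ b)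
    (h : ∀ σ ∈ z, τ ⋖ σ → σ = a ∨ σ = b) : a ∈ z ↔ b ∈ z := by
  have hτ : τ ∉ bdry z := hz ▸ notMem_empty τ
  have hfilter : z.filter (τ ⋖ ·) = ({a, b} : Finset _).filter (· ∈ z) := by
    ext σ
    simp only [mem_filter, mem_insert, mem_singleton]
    constructor
    · exact fun ⟨hσ, hτσ⟩ => ⟨h σ hσ hτσ, hσ⟩
    · rintro ⟨rfl | rfl, hσ⟩ <;> exact ⟨hσ, ‹_›⟩
  rw [mem_bdry, hfilter, filter_insert, filter_singleton] at hτ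
  by_cases ha' : a ∈ z <;> by_cases hb' : b ∈ z <;> simp_all

variable {K : SComplex V} {r : ℕ}

namespace IsRChain

lemma symmDiff {W : Type*} [DecidableEq W] {K : SComplex W} {r : ℕ} {a b : Finset (Finset W)}
    (ha : IsRChain K r a) (hb : IsRChain K r b) :
    IsRChain K r (a ∆ b) := fun σ hσ =>
  (mem_symmDiff.1 hσ).elim (fun h => ha σ h.1) fun h => hb σ h.1

lemma bdry {b : Finset (Finset V)} (hb : IsRChain K (r + 1) b) : IsRChain K r (bdry b) := by
  intro τ hτ
  obtain ⟨σ, hσ, hτσ⟩ := exists_covBy_of_mem_bdry hτ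
  obtain ⟨hσK, hσc⟩ := hb σ hσ
  obtain ⟨hsub, hτc⟩ := covBy_iff_subset_card.1 hτσ
  have hcard : τ.card = r + 1 := by omega
  exact ⟨K.down_closed σ hσK τ hsub (card_pos.1 (by omega)), hcard⟩

end IsRChain

lemma IsRCycle.symmDiff_bdry {z b : Finset (Finset V)} (hz : IsRCycle K r z)
    (hb : IsRChain K (r + 1) b) : IsRCycle K r (z ∆ bdry b) :=
  ⟨hz.1.symmDiff hb.bdry, by rw [bdry_symmDiff, hz.2, bdry_bdry, symmDiff_self]; rfl⟩

lemma Homologous.symmDiff_bdry {z ζ b : Finset (Finset V)} (h : Homologous K r z ζ)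
    (hb : IsRChain K (r + 1) b) : Homologous K r (z ∆ bdry b) ζ := by
  obtain ⟨b₀, hb₀, hb₀z⟩ := h
  exact ⟨b₀ ∆ b, hb₀.symmDiff hb, by rw [bdry_symmDiff, hb₀z, symmDiff_right_comm]⟩

end Chains

section ComplexKG

variable {α k} {G : SimpleGraph α} {c : α → Fin k}

/-- A simplex is *base* if it avoids the new vertices `u_ℓ^ω`. -/
def IsBase (s : Finset (Vtx α k)) : Prop := ∀ x ∈ s, x.isLeft

lemma uV_notMem_of_isBase {s : Finset (Vtx α k)} (hs : IsBase s) (ω : Finset (Vtx α k))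
    (ℓ : Fin (Fintype.card α ^ 3)) : uV α k ω ℓ ∉ s :=
  fun h => by simpa [uV] using hs _ h

lemma isBase_of_mem_bigS {t : Finset (Vtx α k)} (ht : t ∈ bigS α k c) : IsBase t := by
  simp only [bigS, mem_union, mem_image, mem_filter] at ht
  obtain ⟨i, -, rfl⟩ | ⟨p, -, rfl⟩ := ht <;>
    simp [IsBase, sigmaS, tauS, VV, vG, colV]

lemma isBase_of_mem_zetaC {t : Finset (Vtx α k)} (ht : t ∈ zetaC α k) : IsBase t := by
  simp only [zetaC, mem_insert, mem_image] at ht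
  obtain rfl | ⟨u, -, rfl⟩ := ht <;>
    simp [IsBase, VV, vG, dV]

lemma card_VV : (VV α k).card = Fintype.card α :=
  card_image_of_injective _ fun a b h => by simpa [vG] using h

lemma card_of_mem_bigS {t : Finset (Vtx α k)} (ht : t ∈ bigS α k c) :
    t.card = Fintype.card α + 1 := by
  simp only [bigS, mem_union, mem_image, mem_filter] at ht
  obtain ⟨i, -, rfl⟩ | ⟨⟨v, j⟩, ⟨-, hj⟩, rfl⟩ := ht
  · rw [sigmaS, card_insert_of_notMem (by simp [VV, vG, colV]), card_VV]
  · have hv : vG α k v ∈ VV α k := mem_image_of_mem _ (mem_univ v)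
    rw [tauS, card_insert_of_notMem (by simp [VV, vG, colV, Ne.symm hj]),
      card_insert_of_notMem (by simp [VV, vG, colV]), card_erase_of_mem hv, card_VV]
    have := Fintype.card_pos_iff.2 ⟨v⟩
    omega

lemma Undes.isBase {ω : Finset (Vtx α k)} (h : Undes α k G c ω) : IsBase ω := by
  obtain ⟨-, t, ht, hωt, -⟩ := h
  exact fun x hx => isBase_of_mem_bigS ht x (hωt hx)

lemma Undes.card_eq {ω : Finset (Vtx α k)} (h : Undes α k G c ω) :
    ω.card = Fintype.card α := by
  obtain ⟨-, t, ht, -, hcard⟩ := h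
  have := card_of_mem_bigS ht
  omega

lemma IsBase.image_inl_image_retr {ω : Finset (Vtx α k)} (h : IsBase ω) :
    (ω.image (retr α k)).image Sum.inl = ω := by
  rw [image_image]
  refine (image_congr fun x hx => ?_).trans image_id
  obtain ⟨y, rfl⟩ := Sum.isLeft_iff.1 (h x hx)
  rfl

lemma uV_mem_muS_iff {ω ω' : Finset (Vtx α k)} (hω : IsBase ω) (hω' : IsBase ω')
    {ℓ ℓ' : Fin (Fintype.card α ^ 3)} :
    uV α k ω ℓ ∈ muS α k ω' ℓ' ↔ ω = ω' ∧ ℓ = ℓ' := by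
  rw [muS, mem_insert, or_iff_left (uV_notMem_of_isBase hω' ω ℓ)]
  constructor
  · intro h
    simp only [uV, Sum.inr.injEq, Prod.mk.injEq] at h
    exact ⟨by rw [← hω.image_inl_image_retr, h.1, hω'.image_inl_image_retr], h.2⟩
  · rintro ⟨rfl, rfl⟩
    rfl

lemma uV_mem_muS {ω : Finset (Vtx α k)} {ℓ : Fin (Fintype.card α ^ 3)} :
    uV α k ω ℓ ∈ muS α k ω ℓ :=
  mem_insert_self _ _

lemma muS_injective {ω : Finset (Vtx α k)} (hω : IsBase ω) : Function.Injective (muS α k ω) :=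
  fun _ _ h => ((uV_mem_muS_iff hω hω).1 (h ▸ uV_mem_muS)).2.symm

lemma card_muS {ω : Finset (Vtx α k)} (hω : IsBase ω) (ℓ : Fin (Fintype.card α ^ 3)) :
    (muS α k ω ℓ).card = ω.card + 1 :=
  card_insert_of_notMem (uV_notMem_of_isBase hω ω ℓ)

lemma uV_mem_erase_muS {ω : Finset (Vtx α k)} (hω : IsBase ω) (ℓ : Fin (Fintype.card α ^ 3))
    {w : Vtx α k} (hw : w ∈ ω) : uV α k ω ℓ ∈ (muS α k ω ℓ).erase w :=
  mem_erase.2 ⟨(ne_of_mem_of_not_mem hw (uV_notMem_of_isBase hω ω ℓ)).symm, uV_mem_muS⟩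

lemma mem_KG_faces {s : Finset (Vtx α k)} :
    s ∈ (KG α k G c).faces ↔ s.Nonempty ∧ ∃ t ∈ gens α k G c, s ⊆ t := by
  simp [KG, closureOf]

lemma isBase_or_eq_muS_of_mem_gens {t : Finset (Vtx α k)} (ht : t ∈ gens α k G c) :
    IsBase t ∨ ∃ ω ℓ, Undes α k G c ω ∧ t = muS α k ω ℓ := by
  simp only [gens, mem_union, mem_biUnion, mem_filter, mem_image] at ht
  obtain (h | h) | ⟨ω, ⟨-, hω⟩, ℓ, -, rfl⟩ := ht
  · exact Or.inl (isBase_of_mem_zetaC h)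
  · exact Or.inl (isBase_of_mem_bigS h)
  · exact Or.inr ⟨ω, ℓ, hω, rfl⟩

lemma muS_mem_KG_faces {ω : Finset (Vtx α k)} (hω : Undes α k G c ω)
    (ℓ : Fin (Fintype.card α ^ 3)) : muS α k ω ℓ ∈ (KG α k G c).faces := by
  refine mem_KG_faces.2 ⟨insert_nonempty _ _, muS α k ω ℓ, ?_, subset_rfl⟩
  simp only [gens, mem_union, mem_biUnion, mem_filter, mem_image]
  exact Or.inr ⟨ω, ⟨mem_univ _, hω⟩, ℓ, mem_univ _, rfl⟩

lemma subset_muS_of_uV_mem {s ω : Finset (Vtx α k)} (hs : s ∈ (KG α k G c).faces)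
    (hω : Undes α k G c ω) {ℓ : Fin (Fintype.card α ^ 3)} (hu : uV α k ω ℓ ∈ s) :
    s ⊆ muS α k ω ℓ := by
  obtain ⟨-, t, ht, hst⟩ := mem_KG_faces.1 hs
  obtain hb | ⟨ω', ℓ', hω', rfl⟩ := isBase_or_eq_muS_of_mem_gens ht
  · exact absurd (hst hu) (uV_notMem_of_isBase hb ω ℓ)
  · obtain ⟨rfl, rfl⟩ := (uV_mem_muS_iff hω.isBase hω'.isBase).1 (hst hu)
    exact hst

lemma eq_or_eq_erase_of_covBy_muS {s ω : Finset (Vtx α k)} (hω : IsBase ω)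
    {ℓ : Fin (Fintype.card α ^ 3)} (h : s ⋖ muS α k ω ℓ) :
    s = ω ∨ ∃ w ∈ ω, s = (muS α k ω ℓ).erase w := by
  obtain ⟨x, hx, rfl⟩ := covBy_iff_exists_erase.1 h
  rw [muS, mem_insert] at hx
  obtain rfl | hx := hx
  · exact Or.inl (erase_insert (uV_notMem_of_isBase hω ω ℓ))
  · exact Or.inr ⟨x, hx, rfl⟩

lemma Inadm.eq_or_eq_erase {s : Finset (Vtx α k)} (h : Inadm α k G c s) :
    ∃ ω ℓ, Undes α k G c ω ∧ (s = ω ∨ ∃ w ∈ ω, s = (muS α k ω ℓ).erase w) := by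
  obtain ⟨ω, ℓ, hω, hsub, hcard⟩ := h
  exact ⟨ω, ℓ, hω,
    eq_or_eq_erase_of_covBy_muS hω.isBase (covBy_iff_subset_card.2 ⟨hsub, hcard⟩)⟩

lemma erase_muS_mem_iff_of_bdry_eq_empty {z : Finset (Finset (Vtx α k))}
    (hzK : ∀ σ ∈ z, σ ∈ (KG α k G c).faces) (hz : bdry z = ∅) {ω : Finset (Vtx α k)}
    (hω : Undes α k G c ω) (ℓ : Fin (Fintype.card α ^ 3)) {w w' : Vtx α k} (hw : w ∈ ω)
    (hw' : w' ∈ ω) : (muS α k ω ℓ).erase w ∈ z ↔ (muS α k ω ℓ).erase w' ∈ z := by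
  obtain rfl | hne := eq_or_ne w w'
  · rfl
  set μ := muS α k ω ℓ
  have hw'μ : w' ∈ μ.erase w := mem_erase.2 ⟨hne.symm, mem_insert_of_mem hw'⟩
  have hwμ : w ∈ μ.erase w' := mem_erase.2 ⟨hne, mem_insert_of_mem hw⟩
  refine mem_iff_mem_of_bdry_eq_empty hz (τ := (μ.erase w).erase w')
    (fun h => notMem_erase w' μ (h ▸ hw'μ)) (erase_covBy hw'μ)
    (erase_right_comm (a := w) ▸ erase_covBy hwμ) fun σ hσ hτσ => ?_
  -- the ridge still contains `u_ℓ^ω`, so its cofacets in `K(G)` are facets of `μ_ℓ(ω)`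
  have hu : uV α k ω ℓ ∈ (μ.erase w).erase w' :=
    mem_erase.2 ⟨(ne_of_mem_of_not_mem hw' (uV_notMem_of_isBase hω.isBase ω ℓ)).symm,
      uV_mem_erase_muS hω.isBase ℓ hw⟩
  obtain ⟨hτσ, hτc⟩ := covBy_iff_subset_card.1 hτσ
  have hσμ : σ ⋖ μ := by
    refine covBy_iff_subset_card.2 ⟨subset_muS_of_uV_mem (hzK σ hσ) hω (hτσ hu), ?_⟩
    have h₁ := card_erase_of_mem hw'μ
    have h₂ := card_erase_of_mem (s := μ) (mem_insert_of_mem hw)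
    have h₃ := card_pos.2 ⟨w', hw'μ⟩
    omega
  obtain ⟨x, hx, rfl⟩ := covBy_iff_exists_erase.1 hσμ
  by_contra! h
  exact notMem_erase x μ (hτσ (mem_erase.2
    ⟨fun e => h.2 (e ▸ rfl), mem_erase.2 ⟨fun e => h.1 (e ▸ rfl), hx⟩⟩))

variable (G c) in
def muChain (T : Finset (Vtx α k) → Finset (Fin (Fintype.card α ^ 3))) :
    Finset (Finset (Vtx α k)) :=
  univ.filter fun ρ => ∃ ω, Undes α k G c ω ∧ ∃ ℓ ∈ T ω, ρ = muS α k ω ℓ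

variable {T : Finset (Vtx α k) → Finset (Fin (Fintype.card α ^ 3))}

lemma mem_muChain {ρ : Finset (Vtx α k)} :
    ρ ∈ muChain G c T ↔
      ∃ ω, Undes α k G c ω ∧ ∃ ℓ ∈ T ω, ρ = muS α k ω ℓ := by
  simp [muChain]

lemma muS_mem_muChain_iff {ω : Finset (Vtx α k)} (hω : Undes α k G c ω)
    {ℓ : Fin (Fintype.card α ^ 3)} : muS α k ω ℓ ∈ muChain G c T ↔ ℓ ∈ T ω := by
  refine mem_muChain.trans ⟨?_, fun h => ⟨ω, hω, ℓ, h, rfl⟩⟩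
  rintro ⟨ω', hω', ℓ', hℓ', h⟩
  obtain ⟨rfl, rfl⟩ := (uV_mem_muS_iff hω.isBase hω'.isBase).1 (h ▸ uV_mem_muS)
  exact hℓ'

lemma isRChain_muChain {r : ℕ} (hr : r + 1 = Fintype.card α) :
    IsRChain (KG α k G c) (r + 1) (muChain G c T) := by
  intro ρ hρ
  obtain ⟨ω, hω, ℓ, -, rfl⟩ := mem_muChain.1 hρ
  exact ⟨muS_mem_KG_faces hω ℓ, by rw [card_muS hω.isBase, hω.card_eq, hr]⟩

lemma Inadm.of_mem_bdry_muChain {s : Finset (Vtx α k)} (h : s ∈ bdry (muChain G c T)) :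
    Inadm α k G c s := by
  obtain ⟨ρ, hρ, hsρ⟩ := exists_covBy_of_mem_bdry h
  obtain ⟨ω, hω, ℓ, -, rfl⟩ := mem_muChain.1 hρ
  exact ⟨ω, ℓ, hω, covBy_iff_subset_card.1 hsρ⟩

lemma mem_bdry_muChain_iff_odd {ω : Finset (Vtx α k)} (hω : Undes α k G c ω) :
    ω ∈ bdry (muChain G c T) ↔ Odd (T ω).card := by
  have hcofacets : (muChain G c T).filter (ω ⋖ ·) = (T ω).image (muS α k ω) := by
    ext ρ
    simp only [mem_filter, mem_image]
    constructor
    · rintro ⟨hρ, hωρ⟩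
      obtain ⟨ω', hω', ℓ, hℓ, rfl⟩ := mem_muChain.1 hρ
      obtain ⟨hsub, -⟩ := covBy_iff_subset_card.1 hωρ
      have hωω' : ω ⊆ ω' := fun x hx => (mem_insert.1 (hsub hx)).resolve_left
        fun h => uV_notMem_of_isBase hω.isBase ω' ℓ (h ▸ hx)
      obtain rfl := eq_of_subset_of_card_le hωω' (by rw [hω.card_eq, hω'.card_eq])
      exact ⟨ℓ, hℓ, rfl⟩
    · rintro ⟨ℓ, hℓ, rfl⟩
      exact ⟨(muS_mem_muChain_iff hω).2 hℓ,
        covBy_insert (uV_notMem_of_isBase hω.isBase ω ℓ)⟩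
  rw [mem_bdry, hcofacets, card_image_of_injective _ (muS_injective hω.isBase)]

lemma erase_muS_mem_bdry_muChain_iff {ω : Finset (Vtx α k)} (hω : Undes α k G c ω)
    {ℓ : Fin (Fintype.card α ^ 3)} {w : Vtx α k} (hw : w ∈ ω) :
    (muS α k ω ℓ).erase w ∈ bdry (muChain G c T) ↔ ℓ ∈ T ω := by
  have hcofacets : (muChain G c T).filter ((muS α k ω ℓ).erase w ⋖ ·) =
      (muChain G c T).filter (· = muS α k ω ℓ) := by
    refine filter_congr fun ρ hρ => ⟨fun h => ?_, fun h => ?_⟩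
    · obtain ⟨ω', hω', ℓ', -, rfl⟩ := mem_muChain.1 hρ
      obtain ⟨rfl, rfl⟩ := (uV_mem_muS_iff hω.isBase hω'.isBase).1
        (h.le (uV_mem_erase_muS hω.isBase ℓ hw))
      rfl
    · rw [h]
      exact erase_covBy (mem_insert_of_mem hw)
  rw [mem_bdry, hcofacets, ← muS_mem_muChain_iff hω]
  by_cases h : muS α k ω ℓ ∈ muChain G c T
  · rw [show (muChain G c T).filter (· = muS α k ω ℓ) = {muS α k ω ℓ} by
      ext ρ
      simp only [mem_filter, mem_singleton, and_iff_right_iff_imp]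
      exact fun e => e ▸ h]
    simpa using h
  · rw [show (muChain G c T).filter (· = muS α k ω ℓ) = ∅ by
      ext ρ
      simp only [mem_filter, notMem_empty, iff_false, not_and]
      exact fun hρ e => h (e ▸ hρ)]
    simpa using h

variable (G c) in
/-- Index sets `T ω` such that adding `∂ (muChain G c T)` to the cycle `z` removes every simplex
of `R` from it. -/
def IsCorrection (R z : Finset (Finset (Vtx α k)))
    (T : Finset (Vtx α k) → Finset (Fin (Fintype.card α ^ 3))) : Prop :=
  ∀ ω, Undes α k G c ω →
    (∀ ℓ, ∀ s ∈ R, uV α k ω ℓ ∈ s →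
      (ℓ ∈ T ω ↔ ∀ w ∈ ω, (muS α k ω ℓ).erase w ∈ z)) ∧
      (Odd (T ω).card ↔ ω ∈ z)

lemma card_filter_uV_mem_le {R : Finset (Finset (Vtx α k))}
    (hR : ∀ s ∈ R, s ∈ (KG α k G c).faces) {ω : Finset (Vtx α k)}
    (hω : Undes α k G c ω) :
    (univ.filter fun ℓ => ∃ s ∈ R, uV α k ω ℓ ∈ s).card ≤ R.card := by
  refine card_le_card_of_forall_subsingleton (fun ℓ s => uV α k ω ℓ ∈ s)
    (fun ℓ hℓ => (mem_filter.1 hℓ).2) fun s hs ℓ hℓ ℓ' hℓ' => ?_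
  -- a face of `K(G)` contains at most one new vertex `u_ℓ^ω`
  have hsμ := subset_muS_of_uV_mem (hR s hs) hω hℓ.2
  exact ((uV_mem_muS_iff hω.isBase hω.isBase).1 (hsμ hℓ'.2)).2.symm

lemma exists_isCorrection {R : Finset (Finset (Vtx α k))}
    (hR : ∀ s ∈ R, s ∈ (KG α k G c).faces) (hRm : R.card < Fintype.card α ^ 3)
    (z : Finset (Finset (Vtx α k))) : ∃ T, IsCorrection G c R z T := by
  have h : ∀ ω, ∃ Tω : Finset (Fin (Fintype.card α ^ 3)), Undes α k G c ω →
      (∀ ℓ, ∀ s ∈ R, uV α k ω ℓ ∈ s →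
        (ℓ ∈ Tω ↔ ∀ w ∈ ω, (muS α k ω ℓ).erase w ∈ z)) ∧
        (Odd Tω.card ↔ ω ∈ z) := by
    intro ω
    by_cases hω : Undes α k G c ω
    · obtain ⟨Tω, hTω, hodd⟩ := exists_finset_agree_odd_iff
        (univ.filter fun ℓ => ∃ s ∈ R, uV α k ω ℓ ∈ s)
        (univ.filter fun ℓ => ∀ w ∈ ω, (muS α k ω ℓ).erase w ∈ z)
        (by simpa using (card_filter_uV_mem_le hR hω).trans_lt hRm) (ω ∈ z)
      refine ⟨Tω, fun _ => ⟨fun ℓ s hs hu => ?_, hodd⟩⟩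
      simpa using hTω ℓ (by simpa using ⟨s, hs, hu⟩)
    · exact ⟨∅, fun h => absurd h hω⟩
  choose T hT using h
  exact ⟨T, hT⟩

lemma mem_iff_mem_bdry_muChain {R z : Finset (Finset (Vtx α k))}
    (hzK : ∀ σ ∈ z, σ ∈ (KG α k G c).faces) (hz : bdry z = ∅)
    (hzR : ∀ s ∈ R, s ∈ z → Inadm α k G c s) (hT : IsCorrection G c R z T)
    {s : Finset (Vtx α k)} (hs : s ∈ R) : s ∈ z ↔ s ∈ bdry (muChain G c T) := by
  by_cases hs' : s ∈ z ∨ s ∈ bdry (muChain G c T)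
  swap
  · exact iff_of_false (not_or.1 hs').1 (not_or.1 hs').2
  obtain ⟨ω, ℓ, hω, hsω | ⟨w, hw, rfl⟩⟩ :=
    (hs'.elim (hzR s hs) Inadm.of_mem_bdry_muChain).eq_or_eq_erase
  · subst hsω
    rw [mem_bdry_muChain_iff_odd hω, (hT _ hω).2]
  · rw [erase_muS_mem_bdry_muChain_iff hω hw,
      (hT ω hω).1 ℓ _ hs (uV_mem_erase_muS hω.isBase ℓ hw)]
    exact ⟨fun h w' hw' => (erase_muS_mem_iff_of_bdry_eq_empty hzK hz hω ℓ hw hw').1 h,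
      fun h => h w hw⟩

end ComplexKG

theorem statement14 (G : SimpleGraph α) (c : α → Fin k)
    (R : Finset (Finset (Vtx α k)))
    (hR : ∀ s ∈ R, s ∈ (KG α k G c).faces ∧ s.card = (Fintype.card α - 1) + 1)
    (hhit : ∀ z, IsRCycle (KG α k G c) (Fintype.card α - 1) z →
      Homologous (KG α k G c) (Fintype.card α - 1) z (zetaC α k) → ∃ s ∈ R, s ∈ z)
    (hex : ∃ z, IsRCycle (KG α k G c) (Fintype.card α - 1) z ∧
      Homologous (KG α k G c) (Fintype.card α - 1) z (zetaC α k) ∧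
      ∀ s ∈ R, s ∈ z → Inadm α k G c s) :
    Fintype.card α ^ 3 ≤ R.card := by
  obtain hn | hn := Nat.eq_zero_or_pos (Fintype.card α)
  · simp [hn]
  by_contra! hRm
  obtain ⟨z, hz, hzζ, hzR⟩ := hex
  obtain ⟨T, hT⟩ := exists_isCorrection (fun s hs => (hR s hs).1) hRm z
  have hB : IsRChain (KG α k G c) (Fintype.card α - 1 + 1) (muChain G c T) :=
    isRChain_muChain (Nat.sub_add_cancel hn)
  obtain ⟨s, hsR, hs⟩ := hhit _ (hz.symmDiff_bdry hB) (hzζ.symmDiff_bdry hB)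
  have hsz := mem_iff_mem_bdry_muChain (fun σ hσ => (hz.1 σ hσ).1) hz.2 hzR hT hsR
  simp only [mem_symmDiff, hsz] at hs
  tauto

end

end ArxivCut
end

section
/- In the S-subdivision construction, for every i ∈ {1, …, 2(d+1)+1}, the d-simplex Ω_i is the full simplex on the d+1 ≻-highest vertices of C_{i−1}; in particular, the d+1 highest vertices of C_{i−1} always span a d-simplex of C_{i−1}. -/
namespace ArxivCut

noncomputable section

attribute [local instance] Classical.propDecidable

open Finset

/-! ### The S-subdivision of a `d`-simplex -/

/-- The vertices occurring in the S-subdivision of a `d`-simplex: the `d + 1` original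
vertices of `ν` (inl) and the `2(d+1)` new vertices `v₁, …, v_{2(d+1)}` (inr). -/
abbrev SVert (d : ℕ) := Fin (d + 1) ⊕ Fin (2 * (d + 1))

/-- The rank of a vertex, encoding the total order `≻`: the original vertices of `U` come
first (in their given order) and each newly introduced vertex is higher than all previous
ones.  `x ≻ y` means `rank x > rank y`. -/
def rank (d : ℕ) : SVert d → ℕ := Sum.elim Fin.val fun j => (d + 1) + j.val

/-- The key of a set of vertices: comparing keys is exactly the lexicographic comparison
of the decreasingly `≻`-sorted vertex lists (longer prefixes being higher). -/
def key (d : ℕ) (s : Finset (SVert d)) : ℕ := ∑ x ∈ s, 2 ^ rank d x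

/-- The lexicographically highest `d`-simplex of the complex `C` (a complex being recorded
by its set of `d`-simplices). -/
def lexTop (d : ℕ) (C : Finset (Finset (SVert d))) : Finset (SVert d) :=
  if h : C.Nonempty then (Finset.exists_max_image C (key d) h).choose else ∅

/-- Stellar subdivision of the `d`-simplex `Ω` inside `C` with new apex vertex `v`:
`Ω` is removed and replaced by the cone with apex `v` over the boundary of `Ω`. -/
def stellar (d : ℕ) (C : Finset (Finset (SVert d))) (Ω : Finset (SVert d))
    (v : SVert d) : Finset (Finset (SVert d)) :=
  C.erase Ω ∪ Ω.image fun w => insert v (Ω.erase w)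

/-- The new vertex introduced at the `(i+1)`-st iteration (`i = 0, …, 2(d+1) − 1`). -/
def newV (d : ℕ) (i : ℕ) : SVert d :=
  if h : i < 2 * (d + 1) then Sum.inr ⟨i, h⟩ else Sum.inl ⟨0, Nat.succ_pos d⟩

/-- The original `d`-simplex `ν`, on the vertex set `U`. -/
def baseS (d : ℕ) : Finset (SVert d) := Finset.univ.image Sum.inl

/-- The S-subdivision sequence: `(CΩ d i).1 = C_i` (the set of `d`-simplices of the `i`-th
complex) and `(CΩ d i).2 = Ω_{i+1}` (the `d`-simplex to be subdivided next, i.e. the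
lexicographically highest `d`-simplex of `C_i`; for `i = 0` it is `Ω₁ = ν`).
The S-subdivision of `ν` is `C_ν = (CΩ d (2*(d+1))).1`, and
`Ω_{2(d+1)+1} = (CΩ d (2*(d+1))).2`. -/
def CΩ (d : ℕ) : ℕ → Finset (Finset (SVert d)) × Finset (SVert d)
  | 0 => ({baseS d}, baseS d)
  | (i + 1) =>
      let p := CΩ d i
      let C' := stellar d p.1 p.2 (newV d i)
      (C', lexTop d C')

/-- The vertices of a complex recorded by its set of `d`-simplices. -/
def vertsOf (d : ℕ) (C : Finset (Finset (SVert d))) : Finset (SVert d) :=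
  C.biUnion id

/-- The `n` `≻`-highest vertices of the complex `C`: those vertices with fewer than `n`
vertices of `C` strictly above them. -/
def highVerts (d : ℕ) (C : Finset (Finset (SVert d))) (n : ℕ) : Finset (SVert d) :=
  (vertsOf d C).filter fun x => ((vertsOf d C).filter fun y => rank d x < rank d y).card < n

/-! By induction, `Ω_i` is the key-maximal simplex of `C_{i-1}`, has `d + 1` vertices, and
every other vertex of `C_{i-1}` ranks below all of its vertices, while the next apex ranks
above everything. After subdividing `Ω` with such an apex `v`, the key of a cone
`v * (Ω ∖ w)` exceeds that of every old simplex and is largest when `w` is the lowest vertex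
`m` of `Ω`; the new top simplex `v * (Ω ∖ m)` again consists of the highest vertices. -/

lemma rank_injective (d : ℕ) : Function.Injective (rank d) := by
  rintro (a | a) (b | b) h <;> simp only [rank, Sum.elim_inl, Sum.elim_inr] at h
  · exact congrArg _ (Fin.ext h)
  · omega
  · omega
  · exact congrArg _ (Fin.ext (by omega))

lemma rank_newV {d i : ℕ} (hi : i < 2 * (d + 1)) : rank d (newV d i) = d + 1 + i := by
  simp [newV, hi, rank]

lemma key_insert {d : ℕ} {s : Finset (SVert d)} {v : SVert d} (hv : v ∉ s) :
    key d (insert v s) = 2 ^ rank d v + key d s :=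
  sum_insert hv

lemma key_eq_add_key_erase {d : ℕ} {s : Finset (SVert d)} {w : SVert d} (hw : w ∈ s) :
    key d s = 2 ^ rank d w + key d (s.erase w) :=
  (add_sum_erase s _ hw).symm

lemma lexTop_eq_of_key_lt {d : ℕ} {C : Finset (Finset (SVert d))} {Ω : Finset (SVert d)}
    (hΩ : Ω ∈ C) (hmax : ∀ s ∈ C, s ≠ Ω → key d s < key d Ω) : lexTop d C = Ω := by
  have hne : C.Nonempty := ⟨Ω, hΩ⟩
  obtain ⟨hmem, hle⟩ := (exists_max_image C (key d) hne).choose_spec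
  rw [lexTop, dif_pos hne]
  by_contra h
  exact (hle Ω hΩ).not_gt (hmax _ hmem h)

lemma mem_vertsOf {d : ℕ} {C : Finset (Finset (SVert d))} {x : SVert d} :
    x ∈ vertsOf d C ↔ ∃ s ∈ C, x ∈ s := by
  simp [vertsOf]

lemma vertsOf_stellar_subset {d : ℕ} {C : Finset (Finset (SVert d))} {Ω : Finset (SVert d)}
    (hΩ : Ω ∈ C) (v : SVert d) : vertsOf d (stellar d C Ω v) ⊆ insert v (vertsOf d C) := by
  intro x hx
  obtain ⟨s, hs, hxs⟩ := mem_vertsOf.1 hx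
  rcases mem_union.1 hs with hs | hs
  · exact mem_insert_of_mem (mem_vertsOf.2 ⟨s, mem_of_mem_erase hs, hxs⟩)
  · obtain ⟨w, -, rfl⟩ := mem_image.1 hs
    rcases mem_insert.1 hxs with rfl | hx
    · exact mem_insert_self _ _
    · exact mem_insert_of_mem (mem_vertsOf.2 ⟨Ω, hΩ, mem_of_mem_erase hx⟩)

structure IsTopSimplex (d : ℕ) (C : Finset (Finset (SVert d))) (Ω : Finset (SVert d)) :
    Prop where
  mem : Ω ∈ C
  key_lt : ∀ s ∈ C, s ≠ Ω → key d s < key d Ω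
  rank_lt : ∀ x ∈ vertsOf d C, x ∉ Ω → ∀ y ∈ Ω, rank d x < rank d y

namespace IsTopSimplex

variable {d : ℕ} {C : Finset (Finset (SVert d))} {Ω : Finset (SVert d)}

lemma subset_vertsOf (h : IsTopSimplex d C Ω) : Ω ⊆ vertsOf d C :=
  fun _ hx => mem_vertsOf.2 ⟨Ω, h.mem, hx⟩

lemma highVerts_eq (h : IsTopSimplex d C Ω) : highVerts d C Ω.card = Ω := by
  ext x
  simp only [highVerts, mem_filter]
  constructor
  · rintro ⟨hx, hcard⟩
    by_contra hxΩ
    have : Ω ⊆ (vertsOf d C).filter fun y => rank d x < rank d y :=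
      fun y hy => mem_filter.2 ⟨h.subset_vertsOf hy, h.rank_lt x hx hxΩ y hy⟩
    exact (card_le_card this).not_gt hcard
  · intro hx
    refine ⟨h.subset_vertsOf hx, ?_⟩
    have : ((vertsOf d C).filter fun y => rank d x < rank d y) ⊆ Ω.erase x := by
      intro y hy
      obtain ⟨hyV, hxy⟩ := mem_filter.1 hy
      have hyΩ : y ∈ Ω := by
        by_contra hyΩ
        exact (h.rank_lt y hyV hyΩ x hx).not_gt hxy
      exact mem_erase.2 ⟨fun hyx => hxy.ne (by rw [hyx]), hyΩ⟩
    exact (card_le_card this).trans_lt (card_erase_lt_of_mem hx)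

lemma stellar (h : IsTopSimplex d C Ω) {m v : SVert d} (hm : m ∈ Ω)
    (hm_min : ∀ w ∈ Ω, rank d m ≤ rank d w) (hv : ∀ x ∈ vertsOf d C, rank d x < rank d v) :
    IsTopSimplex d (stellar d C Ω v) (insert v (Ω.erase m)) := by
  have hvΩ : v ∉ Ω := fun hvΩ => (hv v (h.subset_vertsOf hvΩ)).false
  have hmv : rank d m < rank d v := hv m (h.subset_vertsOf hm)
  have hm_lt {w : SVert d} (hw : w ∈ Ω) (hwm : w ≠ m) : rank d m < rank d w :=
    (hm_min w hw).lt_of_ne fun hmw => hwm (rank_injective d hmw.symm)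
  have key_cone (w : SVert d) : key d (insert v (Ω.erase w)) = 2 ^ rank d v + key d (Ω.erase w) :=
    key_insert fun hv' => hvΩ (mem_of_mem_erase hv')
  have key_Ω := key_eq_add_key_erase (d := d) hm
  have pow_m_lt_v : 2 ^ rank d m < 2 ^ rank d v := Nat.pow_lt_pow_right one_lt_two hmv
  refine ⟨mem_union_right _ (mem_image.2 ⟨m, hm, rfl⟩), ?_, ?_⟩
  · intro s hs hne
    rw [key_cone]
    rcases mem_union.1 hs with hs | hs
    · have := h.key_lt s (mem_of_mem_erase hs) (ne_of_mem_erase hs)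
      omega
    · obtain ⟨w, hw, rfl⟩ := mem_image.1 hs
      have hwm : w ≠ m := fun hwm => hne (by rw [hwm])
      have := key_eq_add_key_erase (d := d) hw
      have := Nat.pow_lt_pow_right one_lt_two (hm_lt hw hwm)
      rw [key_cone]
      omega
  · intro x hx hxn y hy
    have hxv : x ≠ v := fun hxv => hxn (hxv ▸ mem_insert_self _ _)
    have hxC : x ∈ vertsOf d C := (mem_insert.1 (vertsOf_stellar_subset h.mem v hx)).resolve_left hxv
    rcases mem_insert.1 hy with rfl | hy
    · exact hv x hxC
    obtain ⟨hym, hyΩ⟩ := mem_erase.1 hy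
    by_cases hxΩ : x ∈ Ω
    · have hxm : x = m := by_contra fun hxm => hxn (mem_insert_of_mem (mem_erase.2 ⟨hxm, hxΩ⟩))
      exact hxm ▸ hm_lt hyΩ hym
    · exact h.rank_lt x hxC hxΩ y hyΩ

end IsTopSimplex

lemma isTopSimplex_CΩ (d : ℕ) {i : ℕ} (hi : i ≤ 2 * (d + 1)) :
    IsTopSimplex d (CΩ d i).1 (CΩ d i).2 ∧ (CΩ d i).2.card = d + 1 ∧
      ∀ x ∈ vertsOf d (CΩ d i).1, rank d x < d + 1 + i := by
  induction i with
  | zero =>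
    have hverts : vertsOf d {baseS d} = baseS d := by simp [vertsOf]
    refine ⟨⟨mem_singleton_self _, ?_, ?_⟩, ?_, ?_⟩
    · intro s hs hne
      exact absurd (mem_singleton.1 hs) hne
    · intro x hx hxΩ
      exact absurd (hverts ▸ hx : x ∈ baseS d) hxΩ
    · simp [CΩ, baseS, card_image_of_injective _ Sum.inl_injective]
    · intro x hx
      obtain ⟨a, -, rfl⟩ := mem_image.1 (hverts ▸ hx : x ∈ baseS d)
      simpa [rank] using a.isLt
  | succ i ih =>
    obtain ⟨hTop, hcard, hrank⟩ := ih (by omega)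
    have hv := rank_newV (d := d) (i := i) (by omega)
    obtain ⟨m, hm, hm_min⟩ :=
      exists_min_image _ (rank d) (card_pos.1 (by omega : 0 < (CΩ d i).2.card))
    have hTop' := hTop.stellar hm hm_min (hv ▸ hrank)
    have hvΩ : newV d i ∉ (CΩ d i).2.erase m :=
      fun h => (hv ▸ hrank _ (hTop.subset_vertsOf (mem_of_mem_erase h))).false
    have hlex := lexTop_eq_of_key_lt hTop'.mem hTop'.key_lt
    change IsTopSimplex d _ (lexTop d _) ∧ (lexTop d _).card = d + 1 ∧ _
    rw [hlex, card_insert_of_notMem hvΩ, card_erase_of_mem hm, hcard]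
    refine ⟨hTop', rfl, ?_⟩
    intro x hx
    rcases mem_insert.1 (vertsOf_stellar_subset hTop.mem _ hx) with rfl | hx
    · omega
    · have := hrank x hx
      omega

theorem statement17_general (d : ℕ) (i : ℕ)
    (hi2 : i ≤ 2 * (d + 1) + 1) :
    (CΩ d (i - 1)).2 = highVerts d (CΩ d (i - 1)).1 (d + 1) ∧
    (CΩ d (i - 1)).2 ∈ (CΩ d (i - 1)).1 := by
  obtain ⟨hTop, hcard, -⟩ := isTopSimplex_CΩ d (i := i - 1) (by omega)
  exact ⟨(hcard ▸ hTop.highVerts_eq).symm, hTop.mem⟩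

/-- In the S-subdivision construction, for every
`i ∈ {1, …, 2(d+1)+1}`, the `d`-simplex `Ω_i` is the full simplex on the `d + 1`
`≻`-highest vertices of `C_{i−1}`; in particular the `d + 1` highest vertices of
`C_{i−1}` always span a `d`-simplex of `C_{i−1}`. -/
theorem statement17 (d : ℕ) (hd : 1 ≤ d) (i : ℕ) (hi1 : 1 ≤ i)
    (hi2 : i ≤ 2 * (d + 1) + 1) :
    (CΩ d (i - 1)).2 = highVerts d (CΩ d (i - 1)).1 (d + 1) ∧
    (CΩ d (i - 1)).2 ∈ (CΩ d (i - 1)).1 :=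
  statement17_general d i hi2

end

end ArxivCut
end
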